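/- arXiv:2310.03422 — 6 statements merged into one kernel-verified Lean document; each statement's English description precedes it below -/
import Mathlib

section
/- Let (X,d) be a compact metric space and let F = {f_n : n ∈ ℕ} be a commutative family of homeomorphisms of X generating a nonautonomous system. If x ∈ X is periodic with period r (i.e., ω_{nr}(x) = x for all n ∈ ℤ), then every point of the orbital hull O_H(x) is periodic with period r. -/
open Metric Filter

/-- Forward time maps: `posComp f n = f n ∘ ⋯ ∘ f 1`. -/
def posComp {X : Type*} [TopologicalSpace X] (f : ℕ → X ≃ₜ X) : ℕ → X → X
  | 0 => id
  | n + 1 => (f (n + 1)) ∘ posComp f n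

/-- Backward time maps: `negComp f n = f 1⁻¹ ∘ ⋯ ∘ f n⁻¹`. -/
def negComp {X : Type*} [TopologicalSpace X] (f : ℕ → X ≃ₜ X) : ℕ → X → X
  | 0 => id
  | n + 1 => negComp f n ∘ (f (n + 1)).symm

/-- The time-`n` map `ω_n` of the nonautonomous system generated by `f`. -/
def omegaMap {X : Type*} [TopologicalSpace X] (f : ℕ → X ≃ₜ X) (n : ℤ) : X → X :=
  if 0 ≤ n then posComp f n.toNat else negComp f (-n).toNat

/-- The family is commutative. -/
def Commutes {X : Type*} [TopologicalSpace X] (f : ℕ → X ≃ₜ X) : Prop :=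
  ∀ i j, ∀ x : X, f i (f j x) = f j (f i x)

/-- Orbit `O(x) = {ω_n x : n ∈ ℤ}`. -/
def orbit' {X : Type*} [TopologicalSpace X] (f : ℕ → X ≃ₜ X) (x : X) : Set X :=
  Set.range fun n : ℤ => omegaMap f n x

/-- Orbital hull `O_H(x) = {ω_{k_n} ∘ ⋯ ∘ ω_{k_1} x : k_i ∈ ℤ}`. -/
def orbitalHull {X : Type*} [TopologicalSpace X] (f : ℕ → X ≃ₜ X) (x : X) : Set X :=
  {y | ∃ l : List ℤ, y = l.foldr (fun k z => omegaMap f k z) x}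

/-- Truncated orbital hull of order `k`. -/
def truncHull {X : Type*} [TopologicalSpace X] (f : ℕ → X ≃ₜ X) (k : ℕ) (x : X) : Set X :=
  {y | ∃ l : List ℤ, (∀ r ∈ l, |r| ≤ (k : ℤ)) ∧ y = l.foldr (fun j z => omegaMap f j z) x}

/-- `x` is periodic of period `r`: `ω_{n r} x = x` for all `n ∈ ℤ`. -/
def PeriodicPt {X : Type*} [TopologicalSpace X] (f : ℕ → X ≃ₜ X) (r : ℕ) (x : X) : Prop :=
  ∀ n : ℤ, omegaMap f (n * r) x = x

/-- `Y` is invariant: `ω_k(Y) ⊆ Y` for all `k ∈ ℤ`. -/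
def Invariant {X : Type*} [TopologicalSpace X] (f : ℕ → X ≃ₜ X) (Y : Set X) : Prop :=
  ∀ k : ℤ, omegaMap f k '' Y ⊆ Y

/-- The system is minimal: no proper nonempty closed invariant subset. -/
def MinimalSys {X : Type*} [TopologicalSpace X] (f : ℕ → X ≃ₜ X) : Prop :=
  ∀ Y : Set X, Y.Nonempty → IsClosed Y → Invariant f Y → Y = Set.univ

/-- Equicontinuity of the system. -/
def Equicont {X : Type*} [MetricSpace X] (f : ℕ → X ≃ₜ X) : Prop :=
  ∀ ε > (0 : ℝ), ∃ δ > (0 : ℝ), ∀ a b : X, dist a b < δ →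
    ∀ n : ℤ, dist (omegaMap f n a) (omegaMap f n b) < ε

/-- `S ⊆ ℤ` is `M`-syndetic. -/
def MSyndetic (S : Set ℤ) (M : ℤ) : Prop :=
  ∀ a : ℤ, ∃ n ∈ S, a ≤ n ∧ n < a + M

/-- `x` is almost periodic. -/
def AlmostPeriodicPt {X : Type*} [MetricSpace X] (f : ℕ → X ≃ₜ X) (x : X) : Prop :=
  ∀ ε > (0 : ℝ), ∃ M : ℤ, 0 < M ∧ MSyndetic {n : ℤ | dist (omegaMap f n x) x < ε} M

/-- The system is sensitive at `x`. -/
def SensitiveAt {X : Type*} [MetricSpace X] (f : ℕ → X ≃ₜ X) (x : X) : Prop :=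
  ∃ δ > (0 : ℝ), ∀ U : Set X, IsOpen U → x ∈ U → ∃ m : ℤ, δ < diam (omegaMap f m '' U)

/-- Topological transitivity. -/
def TopTransitive {X : Type*} [TopologicalSpace X] (f : ℕ → X ≃ₜ X) : Prop :=
  ∀ U V : Set X, IsOpen U → IsOpen V → U.Nonempty → V.Nonempty →
    ∃ k : ℤ, ((omegaMap f k '' U) ∩ V).Nonempty

section Aux

variable {X : Type*} [TopologicalSpace X] {f : ℕ → X ≃ₜ X}

lemma comm_symm (hcomm : Commutes f) (i j : ℕ) (x : X) :
    f i ((f j).symm x) = (f j).symm (f i x) := by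
  apply (f j).injective
  rw [(f j).apply_symm_apply, ← hcomm, (f j).apply_symm_apply]

lemma symm_comm_symm (hcomm : Commutes f) (i j : ℕ) (x : X) :
    (f i).symm ((f j).symm x) = (f j).symm ((f i).symm x) := by
  apply (f i).injective
  rw [(f i).apply_symm_apply, comm_symm hcomm, (f i).apply_symm_apply]

lemma posComp_comm_f (hcomm : Commutes f) (n j : ℕ) (x : X) :
    posComp f n (f j x) = f j (posComp f n x) := by
  induction n generalizing x with
  | zero => rfl
  | succ n ih => simp only [posComp, Function.comp_apply, ih]; exact hcomm _ _ _

lemma posComp_comm_symm (hcomm : Commutes f) (n j : ℕ) (x : X) :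
    posComp f n ((f j).symm x) = (f j).symm (posComp f n x) := by
  induction n generalizing x with
  | zero => rfl
  | succ n ih => simp [posComp, ih, comm_symm hcomm]

lemma negComp_comm_f (hcomm : Commutes f) (n j : ℕ) (x : X) :
    negComp f n (f j x) = f j (negComp f n x) := by
  induction n generalizing x with
  | zero => rfl
  | succ n ih => simp [negComp, ← comm_symm hcomm, ih]

lemma negComp_comm_symm (hcomm : Commutes f) (n j : ℕ) (x : X) :
    negComp f n ((f j).symm x) = (f j).symm (negComp f n x) := by
  induction n generalizing x with
  | zero => rfl
  | succ n ih => simp [negComp, symm_comm_symm hcomm, ih]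

lemma posComp_comm_posComp (hcomm : Commutes f) (n m : ℕ) (x : X) :
    posComp f n (posComp f m x) = posComp f m (posComp f n x) := by
  induction m generalizing x with
  | zero => rfl
  | succ m ih => simp [posComp, posComp_comm_f hcomm, ih]

lemma posComp_comm_negComp (hcomm : Commutes f) (n m : ℕ) (x : X) :
    posComp f n (negComp f m x) = negComp f m (posComp f n x) := by
  induction m generalizing x with
  | zero => rfl
  | succ m ih => simp [negComp, posComp_comm_symm hcomm, ih]

lemma negComp_comm_negComp (hcomm : Commutes f) (n m : ℕ) (x : X) :
    negComp f n (negComp f m x) = negComp f m (negComp f n x) := by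
  induction m generalizing x with
  | zero => rfl
  | succ m ih => simp [negComp, negComp_comm_symm hcomm, ih]

lemma omegaMap_comm (hcomm : Commutes f) (a b : ℤ) (x : X) :
    omegaMap f a (omegaMap f b x) = omegaMap f b (omegaMap f a x) := by
  unfold omegaMap
  by_cases ha : 0 ≤ a <;> by_cases hb : 0 ≤ b <;> simp [ha, hb,
    posComp_comm_posComp hcomm, posComp_comm_negComp hcomm,
    negComp_comm_negComp hcomm]

end Aux

theorem stmt0 {X : Type*} [MetricSpace X] [CompactSpace X] (f : ℕ → X ≃ₜ X)
    (hcomm : Commutes f) (x : X) (r : ℕ) (hx : PeriodicPt f r x) :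
    ∀ y ∈ orbitalHull f x, PeriodicPt f r y := by
  rintro y ⟨l, rfl⟩ n
  induction l with
  | nil => exact hx n
  | cons k l ih =>
      simp only [List.foldr_cons]
      rw [omegaMap_comm hcomm, ih]
end

section
/- A nonautonomous system (X,F) on a compact metric space is minimal if and only if for every nonempty open set U ⊆ X there exists k ∈ ℕ such that the truncated orbital hull O_H^k(x) intersects U for every x ∈ X. -/
open Metric Filter

lemma continuous_posComp {X : Type*} [TopologicalSpace X] (f : ℕ → X ≃ₜ X) :
    ∀ n, Continuous (posComp f n)
  | 0 => continuous_id
  | n + 1 => (f (n + 1)).continuous.comp (continuous_posComp f n)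

lemma continuous_negComp {X : Type*} [TopologicalSpace X] (f : ℕ → X ≃ₜ X) :
    ∀ n, Continuous (negComp f n)
  | 0 => continuous_id
  | n + 1 => (continuous_negComp f n).comp (f (n + 1)).symm.continuous

lemma continuous_omegaMap {X : Type*} [TopologicalSpace X] (f : ℕ → X ≃ₜ X) (n : ℤ) :
    Continuous (omegaMap f n) := by
  unfold omegaMap
  split
  · exact continuous_posComp f _
  · exact continuous_negComp f _

lemma continuous_foldr {X : Type*} [TopologicalSpace X] (f : ℕ → X ≃ₜ X) :
    ∀ l : List ℤ, Continuous (fun x : X => l.foldr (fun k z => omegaMap f k z) x)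
  | [] => continuous_id
  | k :: l => (continuous_omegaMap f k).comp (continuous_foldr f l)

lemma foldr_mem_inv {X : Type*} [TopologicalSpace X] (f : ℕ → X ≃ₜ X) {Y : Set X}
    (hY : Invariant f Y) {x : X} (hx : x ∈ Y) :
    ∀ l : List ℤ, l.foldr (fun k z => omegaMap f k z) x ∈ Y
  | [] => hx
  | k :: l => hY k ⟨_, foldr_mem_inv f hY hx l, rfl⟩

lemma natAbs_le_foldr : ∀ (l : List ℤ), ∀ r ∈ l, r.natAbs ≤ l.foldr (fun r m => max r.natAbs m) 0
  | [], r, hr => by simp at hr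
  | a :: l, r, hr => by
    rcases List.mem_cons.mp hr with h | h
    · subst h; exact le_max_left _ _
    · exact le_trans (natAbs_le_foldr l r h) (le_max_right _ _)

lemma hull_invariant {X : Type*} [TopologicalSpace X] (f : ℕ → X ≃ₜ X) (x : X) :
    Invariant f (closure (orbitalHull f x)) := by
  intro k
  refine (image_closure_subset_closure_image (continuous_omegaMap f k)).trans (closure_mono ?_)
  rintro _ ⟨y, ⟨l, rfl⟩, rfl⟩
  exact ⟨k :: l, rfl⟩

theorem stmt3 {X : Type*} [MetricSpace X] [CompactSpace X] (f : ℕ → X ≃ₜ X) :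
    MinimalSys f ↔ ∀ U : Set X, IsOpen U → U.Nonempty →
      ∃ k : ℕ, ∀ x : X, (truncHull f k x ∩ U).Nonempty := by
  constructor
  · intro hmin U hU hUne
    -- for each x, the closure of the orbital hull is all of X
    have hclos : ∀ x : X, closure (orbitalHull f x) = Set.univ := fun x =>
      hmin _ ⟨x, subset_closure ⟨[], rfl⟩⟩ isClosed_closure (hull_invariant f x)
    -- hence the hull meets U
    have hmeet : ∀ x : X, ∃ l : List ℤ, l.foldr (fun k z => omegaMap f k z) x ∈ U := by
      intro x
      obtain ⟨u, hu⟩ := hUne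
      have : u ∈ closure (orbitalHull f x) := by rw [hclos]; trivial
      obtain ⟨y, hyU, l, rfl⟩ := mem_closure_iff.mp this U hU hu
      exact ⟨l, hyU⟩
    choose L hL using hmeet
    -- open cover by preimages
    have hcover : Set.univ ⊆ ⋃ x : X, (fun y : X => (L x).foldr (fun k z => omegaMap f k z) y) ⁻¹' U := by
      intro x _
      exact Set.mem_iUnion.mpr ⟨x, hL x⟩
    obtain ⟨t, ht⟩ := isCompact_univ.elim_finite_subcover _
      (fun x => hU.preimage (continuous_foldr f (L x))) hcover
    refine ⟨t.sup (fun x => (L x).foldr (fun r m => max r.natAbs m) 0), fun x => ?_⟩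
    obtain ⟨i, hi, hxi⟩ := Set.mem_iUnion₂.mp (ht (Set.mem_univ x))
    refine ⟨(L i).foldr (fun k z => omegaMap f k z) x, ⟨L i, ?_, rfl⟩, hxi⟩
    intro r hr
    have h1 : r.natAbs ≤ t.sup (fun x => (L x).foldr (fun r m => max r.natAbs m) 0) :=
      le_trans (natAbs_le_foldr (L i) r hr) (Finset.le_sup (f := fun x => (L x).foldr (fun r m => max r.natAbs m) 0) hi)
    rw [Int.abs_eq_natAbs]
    exact_mod_cast h1
  · intro h Y hYne hYcl hYinv
    by_contra hY
    have hUne : Yᶜ.Nonempty := by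
      obtain ⟨a, ha⟩ := Set.ne_univ_iff_exists_notMem Y |>.mp hY
      exact ⟨a, ha⟩
    obtain ⟨k, hk⟩ := h Yᶜ hYcl.isOpen_compl hUne
    obtain ⟨x, hx⟩ := hYne
    obtain ⟨y, ⟨l, _, rfl⟩, hyc⟩ := hk x
    exact hyc (foldr_mem_inv f hYinv hx l)
end

section
/- Let (X,F) be a nonautonomous system on a compact metric space generated by a commutative family of homeomorphisms. If the family {ω_{k_n}∘⋯∘ω_{k_1} : k_i ∈ ℤ, n ∈ ℕ} is equicontinuous, then for every x ∈ X the closure of the orbital hull of x is a minimal subsystem. -/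
open Metric Filter

/-!
Since `ω_{-k}` inverts `ω_k`, the inverse of a composite map is again a composite map. Hence,
under equicontinuity of the composite family, if a composite `g` moves `x` within `δ` of `z`,
then `g⁻¹` moves `z` within `ε` of `x`: the relation `z ∈ cl O_H(x)` is symmetric. A closed
invariant `Z ⊆ cl O_H(x)` containing some `z` then contains `x`, hence all of `cl O_H(x)`.
-/

section TimeMaps

variable {X : Type*} [TopologicalSpace X] (f : ℕ → X ≃ₜ X)

theorem posComp_negComp (n : ℕ) (x : X) : posComp f n (negComp f n x) = x := by
  induction n generalizing x with
  | zero => rfl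
  | succ n ih => simp [posComp, negComp, ih]

theorem negComp_posComp (n : ℕ) (x : X) : negComp f n (posComp f n x) = x := by
  induction n generalizing x with
  | zero => rfl
  | succ n ih => simp [posComp, negComp, ih]

theorem omegaMap_neg_omegaMap (k : ℤ) (x : X) : omegaMap f (-k) (omegaMap f k x) = x := by
  rcases lt_trichotomy k 0 with hk | rfl | hk
  · simp [omegaMap, not_le.mpr hk, hk.le, posComp_negComp]
  · rfl
  · simp [omegaMap, hk.le, not_le.mpr hk, negComp_posComp]

theorem continuous_posComp_s11 (n : ℕ) : Continuous (posComp f n) := by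
  induction n with
  | zero => exact continuous_id
  | succ n ih => exact (f (n + 1)).continuous.comp ih

theorem continuous_negComp_s11 (n : ℕ) : Continuous (negComp f n) := by
  induction n with
  | zero => exact continuous_id
  | succ n ih => exact ih.comp (f (n + 1)).symm.continuous

theorem continuous_omegaMap_s11 (k : ℤ) : Continuous (omegaMap f k) := by
  unfold omegaMap
  split_ifs
  · exact continuous_posComp_s11 f _
  · exact continuous_negComp_s11 f _

theorem foldr_omegaMap_map_neg_reverse (l : List ℤ) (x : X) :
    (l.map Neg.neg).reverse.foldr (fun k z => omegaMap f k z)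
      (l.foldr (fun k z => omegaMap f k z) x) = x := by
  induction l generalizing x with
  | nil => rfl
  | cons k l ih =>
    simp only [List.map_cons, List.reverse_cons, List.foldr_append, List.foldr_cons,
      List.foldr_nil, omegaMap_neg_omegaMap, ih]

end TimeMaps

section InvariantSets

variable {X : Type*} [TopologicalSpace X] {f : ℕ → X ≃ₜ X}

theorem Invariant.foldr_omegaMap_mem {Z : Set X} (hZ : Invariant f Z) {z : X} (hz : z ∈ Z)
    (l : List ℤ) : l.foldr (fun k w => omegaMap f k w) z ∈ Z := by
  induction l with
  | nil => exact hz
  | cons k l ih => exact hZ k ⟨_, ih, rfl⟩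

theorem Invariant.closure_orbitalHull_subset {Z : Set X} (hZ : Invariant f Z) (hZc : IsClosed Z)
    {z : X} (hz : z ∈ Z) : closure (orbitalHull f z) ⊆ Z :=
  closure_minimal (by rintro _ ⟨l, rfl⟩; exact hZ.foldr_omegaMap_mem hz l) hZc

theorem invariant_closure_orbitalHull (x : X) : Invariant f (closure (orbitalHull f x)) := by
  intro k
  refine (image_closure_subset_closure_image (continuous_omegaMap_s11 f k)).trans (closure_mono ?_)
  rintro _ ⟨y, ⟨l, rfl⟩, rfl⟩
  exact ⟨k :: l, rfl⟩

end InvariantSets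

def CompositeEquicont {X : Type*} [MetricSpace X] (f : ℕ → X ≃ₜ X) : Prop :=
  ∀ ε > (0 : ℝ), ∃ δ > (0 : ℝ), ∀ a b : X, dist a b < δ →
    ∀ l : List ℤ, dist (l.foldr (fun k z => omegaMap f k z) a)
      (l.foldr (fun k z => omegaMap f k z) b) < ε

theorem CompositeEquicont.mem_closure_orbitalHull_symm {X : Type*} [MetricSpace X]
    {f : ℕ → X ≃ₜ X} (hf : CompositeEquicont f) {x z : X}
    (hz : z ∈ closure (orbitalHull f x)) : x ∈ closure (orbitalHull f z) := by
  rw [Metric.mem_closure_iff] at hz ⊢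
  intro ε hε
  obtain ⟨δ, hδ, hδε⟩ := hf ε hε
  obtain ⟨_, ⟨l, rfl⟩, hzl⟩ := hz δ hδ
  refine ⟨_, ⟨(l.map Neg.neg).reverse, rfl⟩, ?_⟩
  simpa only [foldr_omegaMap_map_neg_reverse, dist_comm x] using
    hδε z _ hzl (l.map Neg.neg).reverse

theorem stmt11_general {X : Type*} [MetricSpace X] (f : ℕ → X ≃ₜ X)
    (heq : ∀ ε > (0 : ℝ), ∃ δ > (0 : ℝ), ∀ a b : X, dist a b < δ →
      ∀ l : List ℤ, dist (l.foldr (fun k z => omegaMap f k z) a)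
        (l.foldr (fun k z => omegaMap f k z) b) < ε) :
    ∀ x : X, Invariant f (closure (orbitalHull f x)) ∧
      ∀ Z : Set X, Z ⊆ closure (orbitalHull f x) → Z.Nonempty → IsClosed Z →
        Invariant f Z → Z = closure (orbitalHull f x) := by
  intro x
  refine ⟨invariant_closure_orbitalHull x, fun Z hZx ⟨z, hz⟩ hZc hZ => ?_⟩
  have hxZ : x ∈ Z :=
    hZ.closure_orbitalHull_subset hZc hz
      ((show CompositeEquicont f from heq).mem_closure_orbitalHull_symm (hZx hz))
  exact hZx.antisymm (hZ.closure_orbitalHull_subset hZc hxZ)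

theorem stmt11 {X : Type*} [MetricSpace X] [CompactSpace X] (f : ℕ → X ≃ₜ X)
    (hcomm : Commutes f)
    (heq : ∀ ε > (0 : ℝ), ∃ δ > (0 : ℝ), ∀ a b : X, dist a b < δ →
      ∀ l : List ℤ, dist (l.foldr (fun k z => omegaMap f k z) a)
        (l.foldr (fun k z => omegaMap f k z) b) < ε) :
    ∀ x : X, Invariant f (closure (orbitalHull f x)) ∧
      ∀ Z : Set X, Z ⊆ closure (orbitalHull f x) → Z.Nonempty → IsClosed Z →
        Invariant f Z → Z = closure (orbitalHull f x) :=
  stmt11_general f heq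
end

section
/- Let (X,F) be an equicontinuous nonautonomous system on a compact metric space generated by a commutative family of homeomorphisms. Then (X,F) is topologically transitive if and only if the orbit O(x) is dense in X for every x ∈ X; in particular, an equicontinuous transitive system is minimal. -/
open Metric Filter

theorem stmt13 {X : Type*} [MetricSpace X] [CompactSpace X] (f : ℕ → X ≃ₜ X)
    (hcomm : Commutes f) (heq : Equicont f) :
    (TopTransitive f ↔ ∀ x : X, Dense (orbit' f x)) ∧
    (TopTransitive f → MinimalSys f) := by
  have hfwd : TopTransitive f → ∀ x : X, Dense (orbit' f x) := by
    intro htrans x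
    rw [Metric.dense_iff]
    intro y ε hε
    obtain ⟨δ, hδ, hδ'⟩ := heq (ε / 2) (by linarith)
    obtain ⟨k, v, ⟨u, hu, rfl⟩, hv⟩ :=
      htrans (ball x δ) (ball y (ε / 2)) isOpen_ball isOpen_ball
        ⟨x, mem_ball_self hδ⟩ ⟨y, mem_ball_self (by linarith)⟩
    refine ⟨omegaMap f k x, ?_, ⟨k, rfl⟩⟩
    rw [mem_ball]
    have h1 : dist (omegaMap f k u) (omegaMap f k x) < ε / 2 := hδ' u x (mem_ball.mp hu) k
    have h2 : dist (omegaMap f k u) y < ε / 2 := mem_ball.mp hv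
    calc dist (omegaMap f k x) y ≤ dist (omegaMap f k x) (omegaMap f k u)
          + dist (omegaMap f k u) y := dist_triangle _ _ _
      _ < ε := by rw [dist_comm] at h1; linarith
  constructor
  · constructor
    · exact hfwd
    · intro hdense U V hU hV hUne hVne
      obtain ⟨u, hu⟩ := hUne
      obtain ⟨z, ⟨n, rfl⟩, hz⟩ := (hdense u).exists_mem_open hV hVne
      exact ⟨n, omegaMap f n u, ⟨u, hu, rfl⟩, hz⟩
  · intro htrans Y hYne hYcl hYinv
    obtain ⟨x, hx⟩ := hYne
    have horb : orbit' f x ⊆ Y := by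
      rintro _ ⟨n, rfl⟩
      exact hYinv n ⟨x, hx, rfl⟩
    have : closure (orbit' f x) ⊆ Y := hYcl.closure_subset_iff.mpr horb
    have hdense := (hfwd htrans x).closure_eq
    rw [hdense] at this
    exact Set.eq_univ_of_univ_subset this
end

section
/- Let (X,F) be a nonautonomous system generated by a commutative family of homeomorphisms of a compact metric space with diam(X) > k for some k > 0. If (X,F) is totally transitive and has a dense set of periodic points, then (X,F) is sensitive with sensitivity constant k/4. -/
open Metric Filter

theorem stmt15 {X : Type*} [MetricSpace X] [CompactSpace X] (f : ℕ → X ≃ₜ X)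
    (hcomm : Commutes f) (k : ℝ) (hk : 0 < k) (hdiam : k < diam (Set.univ : Set X))
    (htrans : ∀ r : ℕ, 0 < r → ∀ U V : Set X, IsOpen U → IsOpen V →
      U.Nonempty → V.Nonempty → ∃ m : ℤ, ((omegaMap f (m * r) '' U) ∩ V).Nonempty)
    (hper : Dense {p : X | ∃ r : ℕ, 0 < r ∧ PeriodicPt f r p}) :
    ∀ x : X, ∀ U : Set X, IsOpen U → x ∈ U →
      ∃ m : ℤ, k / 4 < diam (omegaMap f m '' U) := by
  intro x U hU hxU
  obtain ⟨p, ⟨r, hr, hpper⟩, hpU⟩ := hper.exists_mem_open hU ⟨x, hxU⟩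
  obtain ⟨u, v, huv⟩ : ∃ u v : X, k < dist u v := by
    by_contra h
    push_neg at h
    have : diam (Set.univ : Set X) ≤ k :=
      diam_le_of_forall_dist_le hk.le (fun a _ b _ => h a b)
    linarith
  obtain ⟨w, hw⟩ : ∃ w : X, k / 2 < dist p w := by
    by_contra h
    push_neg at h
    have h1 := h u
    have h2 := h v
    have ht := dist_triangle u p v
    rw [dist_comm u p] at ht
    linarith
  obtain ⟨m, y, ⟨z, hzU, hzy⟩, hyw⟩ :=
    htrans r hr U (ball w (k / 8)) hU isOpen_ball ⟨x, hxU⟩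
      ⟨w, mem_ball_self (by linarith)⟩
  refine ⟨m * r, ?_⟩
  have hbd : Bornology.IsBounded (omegaMap f (m * r) '' U) :=
    (isCompact_univ.isBounded).subset (Set.subset_univ _)
  have hy : y ∈ omegaMap f (m * r) '' U := ⟨z, hzU, hzy⟩
  have hp : p ∈ omegaMap f (m * r) '' U := ⟨p, hpU, hpper m⟩
  have hd : dist p y ≤ diam (omegaMap f (m * r) '' U) :=
    dist_le_diam_of_mem hbd hp hy
  have hyw' : dist y w < k / 8 := mem_ball.mp hyw
  have ht := dist_triangle p y w
  linarith
end

section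
/- Consider the nonautonomous system on [0,1] generated by f_{2n−1}(x) = x^{2n} and f_{2n}(x) = x^{1/(2n)} for n ∈ ℕ. Then every point of [0,1] is periodic with period 2, and every pair of distinct points x, y ∈ (0,1) forms a Li–Yorke pair: limsup_n d(ω_n(x), ω_n(y)) > 0 and liminf_n d(ω_n(x), ω_n(y)) = 0. -/
open Metric Filter

section helpers

variable (f : ℕ → (Set.Icc (0 : ℝ) 1) ≃ₜ (Set.Icc (0 : ℝ) 1))
    (hodd : ∀ (n : ℕ) (x : Set.Icc (0 : ℝ) 1),
      ((f (2 * n + 1) x : ℝ)) = (x : ℝ) ^ (2 * (n + 1)))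
    (heven : ∀ (n : ℕ) (x : Set.Icc (0 : ℝ) 1),
      ((f (2 * n + 2) x : ℝ)) = (x : ℝ) ^ ((1 : ℝ) / (2 * (n + 1))))

include hodd heven

lemma inv_pair (n : ℕ) (x : Set.Icc (0 : ℝ) 1) : f (2*n+2) (f (2*n+1) x) = x := by
  have hx : (0:ℝ) ≤ (x:ℝ) := x.2.1
  apply Subtype.ext
  rw [heven, hodd]
  rw [show (1:ℝ)/(2*((n:ℝ)+1)) = (((2*(n+1) : ℕ)):ℝ)⁻¹ by push_cast; ring]
  exact Real.pow_rpow_inv_natCast hx (by omega)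

lemma symm_even (n : ℕ) (x : Set.Icc (0 : ℝ) 1) :
    (f (2*n+2)).symm x = f (2*n+1) x := by
  apply (f (2*n+2)).injective
  rw [Homeomorph.apply_symm_apply, inv_pair f hodd heven]

lemma inv_pair' (n : ℕ) (x : Set.Icc (0 : ℝ) 1) : f (2*n+1) (f (2*n+2) x) = x := by
  apply (f (2*n+2)).injective
  rw [inv_pair f hodd heven]

lemma posComp_even (n : ℕ) (x : Set.Icc (0 : ℝ) 1) : posComp f (2*n) x = x := by
  induction n with
  | zero => rfl
  | succ n ih =>
    have h : 2*(n+1) = (2*n+1)+1 := by ring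
    rw [h]
    show f (2*n+1+1) (posComp f (2*n+1) x) = x
    show f (2*n+1+1) (f (2*n+1) (posComp f (2*n) x)) = x
    rw [ih, show 2*n+1+1 = 2*n+2 from rfl, inv_pair f hodd heven]

lemma posComp_odd (n : ℕ) (x : Set.Icc (0 : ℝ) 1) :
    posComp f (2*n+1) x = f (2*n+1) x := by
  show f (2*n+1) (posComp f (2*n) x) = _
  rw [posComp_even f hodd heven]

lemma negComp_even (n : ℕ) (x : Set.Icc (0 : ℝ) 1) : negComp f (2*n) x = x := by
  induction n with
  | zero => rfl
  | succ n ih =>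
    have h : 2*(n+1) = (2*n+1)+1 := by ring
    rw [h]
    show negComp f (2*n+1) ((f (2*n+1+1)).symm x) = x
    show negComp f (2*n) ((f (2*n+1)).symm ((f (2*n+1+1)).symm x)) = x
    rw [show 2*n+1+1 = 2*n+2 from rfl, symm_even f hodd heven,
      Homeomorph.symm_apply_apply]
    exact ih

end helpers

theorem stmt19 (f : ℕ → (Set.Icc (0 : ℝ) 1) ≃ₜ (Set.Icc (0 : ℝ) 1))
    (hodd : ∀ (n : ℕ) (x : Set.Icc (0 : ℝ) 1),
      ((f (2 * n + 1) x : ℝ)) = (x : ℝ) ^ (2 * (n + 1)))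
    (heven : ∀ (n : ℕ) (x : Set.Icc (0 : ℝ) 1),
      ((f (2 * n + 2) x : ℝ)) = (x : ℝ) ^ ((1 : ℝ) / (2 * (n + 1)))) :
    (∀ x : Set.Icc (0 : ℝ) 1, PeriodicPt f 2 x) ∧
    (∀ x y : Set.Icc (0 : ℝ) 1, 0 < (x : ℝ) → (x : ℝ) < 1 → 0 < (y : ℝ) → (y : ℝ) < 1 →
      x ≠ y →
      Filter.liminf (fun n : ℕ => dist (omegaMap f (n : ℤ) x) (omegaMap f (n : ℤ) y))
        Filter.atTop = 0 ∧
      0 < Filter.limsup (fun n : ℕ => dist (omegaMap f (n : ℤ) x) (omegaMap f (n : ℤ) y))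
        Filter.atTop) := by
  have homega_nat : ∀ (n : ℕ) (x : Set.Icc (0:ℝ) 1), omegaMap f (n : ℤ) x = posComp f n x := by
    intro n x; simp [omegaMap]
  constructor
  · intro x n
    rcases le_or_gt 0 n with hn | hn
    · rw [omegaMap, if_pos (by omega), show (n * ((2:ℕ):ℤ)).toNat = 2 * n.toNat by omega]
      exact posComp_even f hodd heven _ x
    · rw [omegaMap, if_neg (by omega), show (-(n * ((2:ℕ):ℤ))).toNat = 2 * (-n).toNat by omega]
      exact negComp_even f hodd heven _ x
  · intro x y hx0 hx1 hy0 hy1 hxy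
    set g : ℕ → ℝ := fun n => dist (omegaMap f (n:ℤ) x) (omegaMap f (n:ℤ) y) with hg
    have hge : ∀ m : ℕ, g (2*m) = dist x y := by
      intro m
      simp only [hg]
      rw [homega_nat, homega_nat, posComp_even f hodd heven, posComp_even f hodd heven]
    have hgo : ∀ m : ℕ, g (2*m+1) = dist ((x:ℝ)^(2*(m+1))) ((y:ℝ)^(2*(m+1))) := by
      intro m
      simp only [hg]
      rw [homega_nat, homega_nat, posComp_odd f hodd heven, posComp_odd f hodd heven,
        Subtype.dist_eq, hodd, hodd]
    have hb_le : IsBoundedUnder (· ≤ ·) atTop g := Filter.isBoundedUnder_of ⟨1, fun n => by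
      simp only [hg]
      rw [Subtype.dist_eq, Real.dist_eq, abs_sub_le_iff]
      have h1 := (omegaMap f (n:ℤ) x).2
      have h2 := (omegaMap f (n:ℤ) y).2
      simp only [Set.mem_Icc] at h1 h2
      constructor <;> [linarith [h1.2, h2.1]; linarith [h2.2, h1.1]]⟩
    have hb_ge : IsBoundedUnder (· ≥ ·) atTop g :=
      Filter.isBoundedUnder_of ⟨0, fun n => dist_nonneg⟩
    have hmono : Tendsto (fun m : ℕ => 2*(m+1)) atTop atTop :=
      tendsto_atTop_mono (fun m => by simp only [id]; omega) tendsto_id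
    have hx' : Tendsto (fun m : ℕ => (x:ℝ)^(2*(m+1))) atTop (nhds 0) :=
      (tendsto_pow_atTop_nhds_zero_of_lt_one hx0.le hx1).comp hmono
    have hy' : Tendsto (fun m : ℕ => (y:ℝ)^(2*(m+1))) atTop (nhds 0) :=
      (tendsto_pow_atTop_nhds_zero_of_lt_one hy0.le hy1).comp hmono
    have hT : Tendsto (fun m : ℕ => g (2*m+1)) atTop (nhds 0) := by
      simp only [hgo]
      have := hx'.dist hy'
      rwa [dist_self] at this
    have hdxy : 0 < dist x y := dist_pos.mpr hxy
    constructor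
    · apply le_antisymm
      · refine le_of_forall_pos_le_add fun ε hε => ?_
        rw [zero_add]
        refine Filter.liminf_le_of_frequently_le ?_ hb_ge
        rw [frequently_atTop]
        intro N
        obtain ⟨m, hm1, hm2⟩ := ((hT.eventually_lt_const hε).and (eventually_ge_atTop N)).exists
        exact ⟨2*m+1, by omega, hm1.le⟩
      · exact Filter.le_liminf_of_le hb_le.isCoboundedUnder_ge
          (Filter.Eventually.of_forall fun n => dist_nonneg)
    · refine lt_of_lt_of_le hdxy ?_
      refine Filter.le_limsup_of_frequently_le ?_ hb_le
      rw [frequently_atTop]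
      intro N
      exact ⟨2*N, by omega, (hge N).ge⟩
end
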